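/- If 0 < x ≤ y < 1/2, then Φ̄^{−1}(x) − Φ̄^{−1}(y) ≤ (1/Φ̄^{−1}(y))·[ log(y/x) + 1/(Φ̄^{−1}(y))² ]. -/

import Mathlib

open Real

/-- Standard normal density. -/
noncomputable def gphi (t : ℝ) : ℝ := (Real.sqrt (2 * Real.pi))⁻¹ * Real.exp (-(t ^ 2) / 2)

/-- Standard normal upper-tail (survival) function. -/
noncomputable def Phibar (t : ℝ) : ℝ := ∫ s in Set.Ioi t, gphi s

/-- Inverse of the standard normal upper-tail function. -/
noncomputable def PhibarInv (x : ℝ) : ℝ := Function.invFun Phibar x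
/-!
Mills' inequality `t Φ̄(t) ≤ φ(t)` says exactly that `Φ̄(t) e^{t²/2}` is nonincreasing.
For `a = Φ̄⁻¹(y) ≤ b = Φ̄⁻¹(x)` this gives `a (b - a) ≤ (b² - a²)/2 ≤ log (y/x)`, and `a > 0`
because `y < 1/2 = Φ̄(0)`.
-/

open MeasureTheory Set Filter Topology

lemma gphi_pos (t : ℝ) : 0 < gphi t := by
  unfold gphi; positivity

lemma gphi_eq_mul_exp (t : ℝ) :
    gphi t = (√(2 * π))⁻¹ * exp (-(1 / 2) * t ^ 2) := by
  unfold gphi; ring_nf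

lemma continuous_gphi : Continuous gphi := by
  unfold gphi; fun_prop

lemma integrable_gphi : Integrable gphi := by
  rw [funext gphi_eq_mul_exp]
  exact (integrable_exp_neg_mul_sq (by norm_num : (0 : ℝ) < 1 / 2)).const_mul _

lemma integrable_mul_gphi : Integrable fun s ↦ s * gphi s := by
  convert (integrable_mul_exp_neg_mul_sq (by norm_num : (0 : ℝ) < 1 / 2)).const_mul
    (√(2 * π))⁻¹ using 2 with s
  rw [gphi_eq_mul_exp, mul_left_comm]

lemma hasDerivAt_gphi (t : ℝ) : HasDerivAt gphi (-t * gphi t) t := by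
  have h : HasDerivAt (fun s : ℝ ↦ -(s ^ 2) / 2) (-t) t :=
    ((hasDerivAt_pow 2 t).neg.div_const 2).congr_deriv (by push_cast; ring)
  unfold gphi
  exact (h.exp.const_mul _).congr_deriv (by ring)

lemma tendsto_gphi_atTop : Tendsto gphi atTop (𝓝 0) := by
  have h : Tendsto (fun t : ℝ ↦ -(t ^ 2) / 2) atTop atBot :=
    (tendsto_neg_atBot_iff.2 (tendsto_pow_atTop two_ne_zero)).atBot_div_const two_pos
  have := (tendsto_exp_atBot.comp h).const_mul (√(2 * π))⁻¹
  rwa [mul_zero] at this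

lemma integral_Ioi_mul_gphi (t : ℝ) : ∫ s in Ioi t, s * gphi s = gphi t := by
  have hderiv (s : ℝ) (_ : s ∈ Ici t) : HasDerivAt (fun u ↦ -gphi u) (s * gphi s) s :=
    (hasDerivAt_gphi s).neg.congr_deriv (by ring)
  rw [integral_Ioi_of_hasDerivAt_of_tendsto' hderiv integrable_mul_gphi.integrableOn
    (by simpa using tendsto_gphi_atTop.neg), zero_sub, neg_neg]

lemma Phibar_zero : Phibar 0 = 1 / 2 := by
  have h : √(2 * π) ≠ 0 := by positivity
  simp only [Phibar, gphi_eq_mul_exp, integral_const_mul, integral_gaussian_Ioi]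
  rw [show π / (1 / 2) = 2 * π by ring]
  field_simp

lemma Phibar_eq_sub_intervalIntegral (t : ℝ) :
    Phibar t = Phibar 0 - ∫ s in (0 : ℝ)..t, gphi s := by
  rw [← intervalIntegral.integral_Ioi_sub_Ioi' (a := 0) (b := t) integrable_gphi.integrableOn
    integrable_gphi.integrableOn, Phibar, Phibar, sub_sub_cancel]

lemma hasDerivAt_Phibar (t : ℝ) : HasDerivAt Phibar (-gphi t) t := by
  have h := intervalIntegral.integral_hasDerivAt_right (a := 0) (b := t)
    integrable_gphi.intervalIntegrable (continuous_gphi.stronglyMeasurableAtFilter _ _)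
    continuous_gphi.continuousAt
  rw [funext Phibar_eq_sub_intervalIntegral]
  exact h.const_sub _

lemma continuous_Phibar : Continuous Phibar :=
  continuous_iff_continuousAt.2 fun t ↦ (hasDerivAt_Phibar t).continuousAt

lemma strictAnti_Phibar : StrictAnti Phibar :=
  strictAnti_of_hasDerivAt_neg hasDerivAt_Phibar fun t ↦ neg_neg_of_pos (gphi_pos t)

lemma Phibar_pos (t : ℝ) : 0 < Phibar t :=
  calc 0 ≤ Phibar (t + 1) := setIntegral_nonneg measurableSet_Ioi fun s _ ↦ (gphi_pos s).le
    _ < Phibar t := strictAnti_Phibar (lt_add_one t)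

lemma mul_Phibar_le_gphi (t : ℝ) : t * Phibar t ≤ gphi t := by
  rw [Phibar, ← integral_const_mul, ← integral_Ioi_mul_gphi]
  refine setIntegral_mono_on (integrable_gphi.const_mul t).integrableOn
    integrable_mul_gphi.integrableOn measurableSet_Ioi fun s hs ↦ ?_
  exact mul_le_mul_of_nonneg_right (le_of_lt hs) (gphi_pos s).le

lemma tendsto_Phibar_atTop : Tendsto Phibar atTop (𝓝 0) := by
  refine squeeze_zero' (Eventually.of_forall fun t ↦ (Phibar_pos t).le) ?_ tendsto_gphi_atTop
  filter_upwards [eventually_ge_atTop 1] with t ht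
  nlinarith [mul_Phibar_le_gphi t, Phibar_pos t]

lemma Phibar_PhibarInv {x : ℝ} (hx0 : 0 < x) (hx : x ≤ 1 / 2) : Phibar (PhibarInv x) = x := by
  obtain ⟨T, hT⟩ := (tendsto_Phibar_atTop.eventually (gt_mem_nhds hx0)).exists
  have hmem : x ∈ Icc (Phibar T) (Phibar 0) := ⟨hT.le, Phibar_zero ▸ hx⟩
  obtain ⟨t, -, ht⟩ :=
    intermediate_value_uIcc continuous_Phibar.continuousOn (Icc_subset_uIcc hmem)
  exact Function.invFun_eq ⟨t, ht⟩

lemma hasDerivAt_Phibar_mul_exp (t : ℝ) : HasDerivAt (fun t ↦ Phibar t * exp (t ^ 2 / 2))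
    ((t * Phibar t - gphi t) * exp (t ^ 2 / 2)) t := by
  have h : HasDerivAt (fun t : ℝ ↦ t ^ 2 / 2) t t :=
    ((hasDerivAt_pow 2 t).div_const 2).congr_deriv (by push_cast; ring)
  exact ((hasDerivAt_Phibar t).mul h.exp).congr_deriv (by ring)

lemma antitone_Phibar_mul_exp : Antitone fun t ↦ Phibar t * exp (t ^ 2 / 2) := by
  refine antitone_of_deriv_nonpos (fun t ↦ (hasDerivAt_Phibar_mul_exp t).differentiableAt)
    fun t ↦ ?_
  rw [(hasDerivAt_Phibar_mul_exp t).deriv]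
  exact mul_nonpos_of_nonpos_of_nonneg (sub_nonpos.2 (mul_Phibar_le_gphi t)) (exp_pos _).le

lemma sq_sub_sq_div_two_le_log_Phibar_div {a b : ℝ} (hab : a ≤ b) :
    (b ^ 2 - a ^ 2) / 2 ≤ log (Phibar a / Phibar b) := by
  have h := antitone_Phibar_mul_exp hab
  rw [le_log_iff_exp_le (div_pos (Phibar_pos a) (Phibar_pos b)), le_div_iff₀ (Phibar_pos b),
    sub_div, exp_sub, div_mul_eq_mul_div, div_le_iff₀ (exp_pos _)]
  linarith

theorem quantile_diff_upper_log (x y : ℝ) (hx0 : 0 < x) (hxy : x ≤ y) (hy : y < 1 / 2) :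
    PhibarInv x - PhibarInv y ≤
      (1 / PhibarInv y) * (Real.log (y / x) + 1 / (PhibarInv y) ^ 2) := by
  set a := PhibarInv y
  set b := PhibarInv x
  have hya : Phibar a = y := Phibar_PhibarInv (hx0.trans_le hxy) hy.le
  have hxb : Phibar b = x := Phibar_PhibarInv hx0 (hxy.trans hy.le)
  have ha : 0 < a := strictAnti_Phibar.lt_iff_gt.1 (by rwa [hya, Phibar_zero])
  have hab : a ≤ b := strictAnti_Phibar.le_iff_ge.1 (by rwa [hya, hxb])
  have hlog : a * (b - a) ≤ log (y / x) := by
    have := sq_sub_sq_div_two_le_log_Phibar_div hab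
    rw [hya, hxb] at this
    nlinarith [sq_nonneg (b - a)]
  rw [one_div_mul_eq_div, le_div_iff₀ ha]
  have : 0 < 1 / a ^ 2 := by positivity
  linarith
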